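/- Let S be a collection of dyadic intervals satisfying the Carleson condition Σ_{J ∈ S : J ⊆ I} |J| ≤ Λ|I| for all I ∈ S, with Λ ≥ 2. Then S can be partitioned into at most ⌈2Λ⌉ subcollections, each of which is 1/2-sparse. -/

import Mathlib

/-!
Colour each interval `J ∈ 𝒮` by the number of members of `𝒮` containing it, taken modulo
`M = ⌈2Λ⌉`. Within one colour, let `E_J` be the part of `J` not covered by smaller intervals of
the same colour; these sets are pairwise disjoint because the family is nested. If a point `x ∈ J`
is covered by a smaller interval `K` of the colour of `J`, then the depths of `K` and `J` differ
by at least `M`, so `x` lies in at least `M + 1` members of `𝒮` inside `J`. Double counting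
against the Carleson condition shows that the covered part of `J` has size at most
`Λ|J| / (M + 1) < |J| / 2`.
-/

/-- The dyadic interval of integers encoded by `(k, m)`, namely `[2^k m, 2^k (m+1)) ∩ ℤ`. -/
noncomputable def dyad (p : ℕ × ℤ) : Finset ℤ := Finset.Ico (2 ^ p.1 * p.2) (2 ^ p.1 * (p.2 + 1))

open Finset

section Laminar

variable {α : Type*}

def IsLaminar (𝒮 : Finset (Finset α)) : Prop :=
  ∀ J ∈ 𝒮, ∀ K ∈ 𝒮, J ⊆ K ∨ K ⊆ J ∨ Disjoint J K

lemma IsLaminar.mono {𝒮 𝒯 : Finset (Finset α)} (h𝒮 : IsLaminar 𝒮) (h𝒯 : 𝒯 ⊆ 𝒮) :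
    IsLaminar 𝒯 :=
  fun J hJ K hK => h𝒮 J (h𝒯 hJ) K (h𝒯 hK)

variable [DecidableEq α]

def IsCarleson (Λ : ℝ) (𝒮 : Finset (Finset α)) : Prop :=
  ∀ J ∈ 𝒮, ∑ K ∈ 𝒮 with K ⊆ J, (#K : ℝ) ≤ Λ * #J

def IsSparse (𝒯 : Finset (Finset α)) : Prop :=
  ∃ E : Finset α → Finset α, (∀ J ∈ 𝒯, E J ⊆ J ∧ #J < 2 * #(E J)) ∧
    (𝒯 : Set (Finset α)).PairwiseDisjoint E

def uncovered (𝒯 : Finset (Finset α)) (J : Finset α) : Finset α :=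
  J \ {K ∈ 𝒯 | K ⊂ J}.sup id

def ancestors (𝒮 : Finset (Finset α)) (J : Finset α) : Finset (Finset α) :=
  {K ∈ 𝒮 | J ⊆ K}

variable {𝒮 𝒯 : Finset (Finset α)} {J K : Finset α} {Λ : ℝ} {M : ℕ}

lemma IsCarleson.one_le (h𝒮 : IsCarleson Λ 𝒮) (hJ : J ∈ 𝒮) (hJne : J.Nonempty) : 1 ≤ Λ := by
  have hJpos : (0 : ℝ) < #J := by exact_mod_cast hJne.card_pos
  have hself : (#J : ℝ) ≤ ∑ K ∈ 𝒮 with K ⊆ J, (#K : ℝ) :=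
    single_le_sum (f := fun K => (#K : ℝ)) (fun _ _ => by positivity)
      (mem_filter.2 ⟨hJ, subset_rfl⟩)
  nlinarith [h𝒮 J hJ]

lemma pairwiseDisjoint_uncovered (h𝒯 : IsLaminar 𝒯) :
    (𝒯 : Set (Finset α)).PairwiseDisjoint (uncovered 𝒯) := by
  have of_ssubset : ∀ {J K}, J ∈ 𝒯 → J ⊂ K → Disjoint (uncovered 𝒯 J) (uncovered 𝒯 K) :=
    fun hJ hJK =>
      disjoint_sdiff.mono_left <| sdiff_subset.trans <|
        le_sup (f := id) (mem_filter.2 ⟨hJ, hJK⟩)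
  intro J hJ K hK hJK
  rcases h𝒯 J hJ K hK with h | h | h
  · exact of_ssubset hJ (h.ssubset_of_ne hJK)
  · exact (of_ssubset hK (h.ssubset_of_ne hJK.symm)).symm
  · exact h.mono sdiff_subset sdiff_subset

lemma card_ancestors_lt (hK : K ∈ 𝒮) (hKJ : K ⊂ J) :
    #(ancestors 𝒮 J) < #(ancestors 𝒮 K) := by
  refine card_lt_card ((ssubset_iff_of_subset fun L hL => ?_).2 ⟨K, ?_, ?_⟩)
  · exact mem_filter.2 ⟨(mem_filter.1 hL).1, hKJ.subset.trans (mem_filter.1 hL).2⟩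
  · exact mem_filter.2 ⟨hK, subset_rfl⟩
  · exact fun hJK => hKJ.not_subset (mem_filter.1 hJK).2

/-- Every member of `𝒮` above `K` is either above `J` or lies between `x` and `J`;
`J` itself is of both kinds. -/
lemma card_ancestors_add_one_le (h𝒮 : IsLaminar 𝒮) (hJ : J ∈ 𝒮) (hKJ : K ⊆ J) {x : α}
    (hx : x ∈ K) :
    #(ancestors 𝒮 K) + 1 ≤ #(ancestors 𝒮 J) + #{L ∈ 𝒮 | L ⊆ J ∧ x ∈ L} := by
  set B := {L ∈ 𝒮 | L ⊆ J ∧ x ∈ L}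
  have hcover : ancestors 𝒮 K ⊆ ancestors 𝒮 J ∪ B := by
    intro L hL
    obtain ⟨hL𝒮, hKL⟩ := mem_filter.1 hL
    rcases h𝒮 L hL𝒮 J hJ with h | h | h
    · exact mem_union_right _ (mem_filter.2 ⟨hL𝒮, h, hKL hx⟩)
    · exact mem_union_left _ (mem_filter.2 ⟨hL𝒮, h⟩)
    · exact absurd (hKJ hx) (disjoint_left.1 h (hKL hx))
  have hJboth : J ∈ ancestors 𝒮 J ∩ B :=
    mem_inter.2 ⟨mem_filter.2 ⟨hJ, subset_rfl⟩, mem_filter.2 ⟨hJ, subset_rfl, hKJ hx⟩⟩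
  calc #(ancestors 𝒮 K) + 1 ≤ #(ancestors 𝒮 J ∪ B) + #(ancestors 𝒮 J ∩ B) :=
        add_le_add (card_le_card hcover) (card_pos.2 ⟨J, hJboth⟩)
    _ = #(ancestors 𝒮 J) + #B := card_union_add_card_inter _ _

lemma add_one_le_card_of_modEq (h𝒮 : IsLaminar 𝒮) (hJ : J ∈ 𝒮) (hK : K ∈ 𝒮) (hKJ : K ⊂ J)
    {x : α} (hx : x ∈ K) (hmod : #(ancestors 𝒮 J) ≡ #(ancestors 𝒮 K) [MOD M]) :
    M + 1 ≤ #{L ∈ 𝒮 | L ⊆ J ∧ x ∈ L} := by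
  have hgap := hmod.add_le_of_lt (card_ancestors_lt hK hKJ)
  have := card_ancestors_add_one_le h𝒮 hJ hKJ.subset hx
  omega

lemma two_mul_card_lt_of_le_card_filter {U : Finset α} (hM : 2 * Λ ≤ M) (hJne : J.Nonempty)
    (hC : ∑ K ∈ 𝒮 with K ⊆ J, (#K : ℝ) ≤ Λ * #J)
    (hU : ∀ x ∈ U, M + 1 ≤ #{L ∈ 𝒮 | L ⊆ J ∧ x ∈ L}) :
    2 * #U < #J := by
  have hcount : #U * (M + 1) ≤ ∑ L ∈ 𝒮 with L ⊆ J, #L :=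
    (le_sum_card_inter fun x hx => by simpa only [filter_filter] using hU x hx).trans
      (sum_le_sum fun L _ => card_le_card inter_subset_right)
  have hcountℝ : (#U : ℝ) * (M + 1) ≤ Λ * #J :=
    le_trans (by exact_mod_cast hcount) hC
  have hJpos : (0 : ℝ) < #J := by exact_mod_cast hJne.card_pos
  have : (2 * #U : ℝ) * (M + 1) < #J * (M + 1) :=
    calc (2 * #U : ℝ) * (M + 1) = 2 * (#U * (M + 1)) := by ring
      _ ≤ 2 * Λ * #J := by linarith
      _ ≤ M * #J := mul_le_mul_of_nonneg_right hM hJpos.le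
      _ < #J * (M + 1) := by linarith
  exact_mod_cast lt_of_mul_lt_mul_right this (by positivity)

lemma isSparse_of_ancestors_modEq (h𝒮 : IsLaminar 𝒮) (hC : IsCarleson Λ 𝒮) (hempty : ∅ ∉ 𝒮)
    (hM : 2 * Λ ≤ M) (h𝒯 : 𝒯 ⊆ 𝒮)
    (hmod : ∀ J ∈ 𝒯, ∀ K ∈ 𝒯, #(ancestors 𝒮 J) ≡ #(ancestors 𝒮 K) [MOD M]) :
    IsSparse 𝒯 := by
  refine ⟨uncovered 𝒯, fun J hJ => ⟨sdiff_subset, ?_⟩, pairwiseDisjoint_uncovered (h𝒮.mono h𝒯)⟩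
  set U := {K ∈ 𝒯 | K ⊂ J}.sup id
  have hUJ : U ⊆ J := Finset.sup_le fun K hK => (mem_filter.1 hK).2.subset
  have hJne : J.Nonempty := nonempty_iff_ne_empty.2 (ne_of_mem_of_not_mem (h𝒯 hJ) hempty)
  have hU : 2 * #U < #J := two_mul_card_lt_of_le_card_filter hM hJne (hC J (h𝒯 hJ)) fun x hx => by
    obtain ⟨K, hK, hxK⟩ := mem_sup.1 hx
    obtain ⟨hK𝒯, hKJ⟩ := mem_filter.1 hK
    exact add_one_le_card_of_modEq h𝒮 (h𝒯 hJ) (h𝒯 hK𝒯) hKJ hxK (hmod J hJ K hK𝒯)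
  rw [uncovered, card_sdiff_of_subset hUJ]
  omega

theorem IsCarleson.exists_colouring_isSparse (hC : IsCarleson Λ 𝒮) (h𝒮 : IsLaminar 𝒮)
    (hempty : ∅ ∉ 𝒮) :
    ∃ c : Finset α → ℕ, (∀ J ∈ 𝒮, c J < ⌈2 * Λ⌉₊) ∧ ∀ i, IsSparse {J ∈ 𝒮 | c J = i} := by
  refine ⟨fun J => #(ancestors 𝒮 J) % ⌈2 * Λ⌉₊, fun J hJ => Nat.mod_lt _ ?_, fun i => ?_⟩
  · have := hC.one_le hJ (nonempty_iff_ne_empty.2 (ne_of_mem_of_not_mem hJ hempty))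
    exact Nat.ceil_pos.2 (by linarith)
  · exact isSparse_of_ancestors_modEq h𝒮 hC hempty (Nat.le_ceil _) (filter_subset _ _)
      fun J hJ K hK => (mem_filter.1 hJ).2.trans (mem_filter.1 hK).2.symm

end Laminar

section Dyadic

lemma mem_dyad {x : ℤ} {p : ℕ × ℤ} : x ∈ dyad p ↔ x / 2 ^ p.1 = p.2 := by
  have h2 : (0 : ℤ) < 2 ^ p.1 := by positivity
  rw [dyad, mem_Ico, le_antisymm_iff, and_comm (a := x / 2 ^ p.1 ≤ p.2),
    ← Int.lt_add_one_iff (a := x / 2 ^ p.1), Int.le_ediv_iff_mul_le h2, Int.ediv_lt_iff_lt_mul h2,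
    mul_comm p.2, mul_comm (p.2 + 1)]

lemma card_dyad (p : ℕ × ℤ) : #(dyad p) = 2 ^ p.1 := by
  rw [dyad, Int.card_Ico, ← mul_sub, add_sub_cancel_left, mul_one]
  exact_mod_cast Int.toNat_natCast (2 ^ p.1)

lemma dyad_nonempty (p : ℕ × ℤ) : (dyad p).Nonempty :=
  card_pos.1 (by rw [card_dyad]; positivity)

lemma dyad_injective : Function.Injective dyad := by
  intro p q hpq
  have hk : p.1 = q.1 :=
    Nat.pow_right_injective le_rfl (by simpa only [card_dyad] using congrArg card hpq)
  obtain ⟨x, hx⟩ := dyad_nonempty p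
  have hq := mem_dyad.1 (hpq ▸ hx)
  rw [← hk, mem_dyad.1 hx] at hq
  exact Prod.ext hk hq

lemma dyad_subset_or_disjoint_of_le {p q : ℕ × ℤ} (h : p.1 ≤ q.1) :
    dyad p ⊆ dyad q ∨ Disjoint (dyad p) (dyad q) := by
  obtain ⟨d, hd⟩ := Nat.exists_eq_add_of_le h
  have hdiv : ∀ x ∈ dyad p, x / 2 ^ q.1 = p.2 / 2 ^ d := fun x hx => by
    rw [hd, pow_add, ← Int.ediv_ediv_of_nonneg (by positivity), mem_dyad.1 hx]
  by_cases hpq : p.2 / 2 ^ d = q.2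
  · exact Or.inl fun x hx => mem_dyad.2 ((hdiv x hx).trans hpq)
  · exact Or.inr <| disjoint_left.2 fun x hxp hxq => hpq ((hdiv x hxp).symm.trans (mem_dyad.1 hxq))

lemma isLaminar_image_dyad (S : Finset (ℕ × ℤ)) : IsLaminar (S.image dyad) := by
  simp only [IsLaminar, forall_mem_image]
  intro p _ q _
  rcases le_total p.1 q.1 with h | h
  · exact (dyad_subset_or_disjoint_of_le h).imp_right Or.inr
  · rcases dyad_subset_or_disjoint_of_le h with h' | h'
    · exact Or.inr (Or.inl h')
    · exact Or.inr (Or.inr h'.symm)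

lemma isCarleson_image_dyad {Λ : ℝ} {S : Finset (ℕ × ℤ)}
    (hS : ∀ p ∈ S, ∑ q ∈ S.filter (fun q => dyad q ⊆ dyad p), ((2 : ℝ) ^ q.1) ≤ Λ * 2 ^ p.1) :
    IsCarleson Λ (S.image dyad) := by
  simp only [IsCarleson, forall_mem_image]
  intro p hp
  rw [filter_image, sum_image dyad_injective.injOn]
  simpa only [card_dyad, Nat.cast_pow, Nat.cast_ofNat] using hS p hp

end Dyadic

theorem stmt_10_general (Λ : ℝ) (S : Finset (ℕ × ℤ))
    (hCarleson : ∀ p ∈ S,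
      ∑ q ∈ S.filter (fun q => dyad q ⊆ dyad p), ((2 : ℝ) ^ q.1) ≤ Λ * (2 : ℝ) ^ p.1) :
    ∃ c : ℕ × ℤ → ℕ, (∀ p ∈ S, c p < ⌈2 * Λ⌉₊) ∧
      ∀ i : ℕ, ∃ E : ℕ × ℤ → Finset ℤ,
        (∀ p ∈ S.filter (fun p => c p = i),
          E p ⊆ dyad p ∧ ((2 : ℝ) ^ p.1) / 2 < (E p).card) ∧
        ((↑(S.filter (fun p => c p = i)) : Set (ℕ × ℤ)).Pairwise
          fun p q => Disjoint (E p) (E q)) := by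
  have hempty : ∅ ∉ S.image dyad := by
    simp only [mem_image, not_exists, not_and]
    exact fun p _ => (dyad_nonempty p).ne_empty
  obtain ⟨c, hc, hsparse⟩ := (isCarleson_image_dyad hCarleson).exists_colouring_isSparse
    (isLaminar_image_dyad S) hempty
  refine ⟨c ∘ dyad, fun p hp => hc _ (mem_image_of_mem _ hp), fun i => ?_⟩
  obtain ⟨E, hE, hdisj⟩ := hsparse i
  have hmem : ∀ p ∈ S.filter (fun p => c (dyad p) = i), dyad p ∈ {J ∈ S.image dyad | c J = i} :=
    fun p hp => mem_filter.2 ⟨mem_image_of_mem _ (mem_filter.1 hp).1, (mem_filter.1 hp).2⟩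
  refine ⟨E ∘ dyad, fun p hp => ?_, fun p hp q hq hpq => hdisj (hmem p hp) (hmem q hq)
    (dyad_injective.ne hpq)⟩
  obtain ⟨hsub, hcard⟩ := hE _ (hmem p hp)
  rw [card_dyad] at hcard
  refine ⟨hsub, ?_⟩
  have : (2 : ℝ) ^ p.1 < 2 * #(E (dyad p)) := by exact_mod_cast hcard
  simp only [Function.comp_apply]
  linarith

/-- A collection of dyadic intervals satisfying a Carleson condition with constant `Λ ≥ 2`
can be partitioned into at most `⌈2Λ⌉` subcollections, each `1/2`-sparse. -/
theorem stmt_10 (Λ : ℝ) (hΛ : 2 ≤ Λ) (S : Finset (ℕ × ℤ))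
    (hCarleson : ∀ p ∈ S,
      ∑ q ∈ S.filter (fun q => dyad q ⊆ dyad p), ((2 : ℝ) ^ q.1) ≤ Λ * (2 : ℝ) ^ p.1) :
    ∃ c : ℕ × ℤ → ℕ, (∀ p ∈ S, c p < ⌈2 * Λ⌉₊) ∧
      ∀ i : ℕ, ∃ E : ℕ × ℤ → Finset ℤ,
        (∀ p ∈ S.filter (fun p => c p = i),
          E p ⊆ dyad p ∧ ((2 : ℝ) ^ p.1) / 2 < (E p).card) ∧
        ((↑(S.filter (fun p => c p = i)) : Set (ℕ × ℤ)).Pairwise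
          fun p q => Disjoint (E p) (E q)) :=
  stmt_10_general Λ S hCarleson
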